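/- The central subgroup [A,B]^(2) of the second nilpotent product A *₂ B is isomorphic as a group to the tensor product A^{ab} ⊗ B^{ab} of the abelianizations, via the map sending the class of [a,b] to ā ⊗ b̄. -/

import Mathlib

open Monoid
open scoped commutatorElement

/-- The normal subgroup of the free product `A ∗ B` generated by commutators
`⁅x, ⁅a, b⁆⁆` with `x ∈ A ∗ B`, `a ∈ A`, `b ∈ B`. -/
def nil2Rel (A B : Type*) [Group A] [Group B] : Subgroup (Coprod A B) :=
  Subgroup.normalClosure
    {z | ∃ (x : Coprod A B) (a : A) (b : B), z = ⁅x, ⁅(Coprod.inl a : Coprod A B), Coprod.inr b⁆⁆}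

instance (A B : Type*) [Group A] [Group B] : (nil2Rel A B).Normal :=
  Subgroup.normalClosure_normal

/-- The second nilpotent product `A *₂ B = (A ∗ B)/[A ∗ B, [A,B]]`. -/
def Nil2 (A B : Type*) [Group A] [Group B] : Type _ :=
  Coprod A B ⧸ nil2Rel A B

instance (A B : Type*) [Group A] [Group B] : Group (Nil2 A B) :=
  QuotientGroup.Quotient.group _

/-- Canonical map `A → A *₂ B`. -/
def Nil2.inl {A B : Type*} [Group A] [Group B] : A →* Nil2 A B :=
  (QuotientGroup.mk' (nil2Rel A B)).comp Coprod.inl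

/-- Canonical map `B → A *₂ B`. -/
def Nil2.inr {A B : Type*} [Group A] [Group B] : B →* Nil2 A B :=
  (QuotientGroup.mk' (nil2Rel A B)).comp Coprod.inr

/-- The subgroup `[A,B]⁽²⁾` of `A *₂ B` generated by the commutators `⁅a, b⁆`. -/
def commSubgroup (A B : Type*) [Group A] [Group B] : Subgroup (Nil2 A B) :=
  Subgroup.closure {z | ∃ (a : A) (b : B), z = ⁅(Nil2.inl a : Nil2 A B), Nil2.inr b⁆}

/-!
Map `A *₂ B` to the Heisenberg group `Aᵃᵇ × Bᵃᵇ × (Aᵃᵇ ⊗ Bᵃᵇ)` by `a ↦ (ā, 0, 0)`, `b ↦ (0, b̄, 0)`.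
This is well defined because commutators of the images of `a` and `b` are central, and it sends
`⁅a, b⁆` to the central element `(0, 0, ā ⊗ b̄)`, which gives `[A,B]⁽²⁾ → Aᵃᵇ ⊗ Bᵃᵇ`.
Conversely, `⁅a, b⁆` is central in `A *₂ B`, so `(a, b) ↦ ⁅a, b⁆` is multiplicative in each
variable with values in the abelian group `[A,B]⁽²⁾`; it therefore factors through `Aᵃᵇ ⊗ Bᵃᵇ`.
Both composites fix the generators.
-/

open TensorProduct

section Commutator

variable {G : Type*} [Group G]

theorem commutatorElement_mul_left_of_mem_center {a b c : G} (h : ⁅b, c⁆ ∈ Subgroup.center G) :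
    ⁅a * b, c⁆ = ⁅a, c⁆ * ⁅b, c⁆ := by
  have h := Subgroup.mem_center_iff.mp h
  rw [commutatorElement_mul_left_eq_conj_mul, h a, mul_inv_cancel_right, h]

theorem commutatorElement_mul_right_of_mem_center {a b c : G} (h : ⁅a, c⁆ ∈ Subgroup.center G) :
    ⁅a, b * c⁆ = ⁅a, b⁆ * ⁅a, c⁆ := by
  have h := Subgroup.mem_center_iff.mp h
  rw [commutatorElement_mul_right_eq_mul_conj, mul_assoc _ b, h b, ← mul_assoc,
    mul_inv_cancel_right]

end Commutator

namespace Abelianization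

variable {G H C : Type*} [Group G] [Group H] [CommGroup C]

def lift₂ (f : G →* H →* C) : Abelianization G →* Abelianization H →* C :=
  (lift (lift f).flip).flip

@[simp]
theorem lift₂_apply_of (f : G →* H →* C) (g : G) (h : H) : lift₂ f (of g) (of h) = f g h :=
  rfl

end Abelianization

def MonoidHom.toAdditive₂ {M N P : Type*} [MulOneClass M] [MulOneClass N] [CommMonoid P]
    (f : M →* N →* P) : Additive M →+ Additive N →+ Additive P where
  toFun m := (f m.toMul).toAdditive
  map_zero' := by ext; simp
  map_add' m m' := by ext; simp

theorem AddMonoidHom.apply_zsmul_left_eq_apply_zsmul_right {M N P : Type*} [AddCommGroup M]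
    [AddCommGroup N] [AddCommGroup P] (f : M →+ N →+ P) (r : ℤ) (m : M) (n : N) :
    f (r • m) n = f m (r • n) := by
  simp only [map_zsmul, AddMonoidHom.coe_smul, Pi.smul_apply]

theorem TensorProduct.addMonoidHom_ext_abelianization {G H P : Type*} [Group G] [Group H]
    [AddCommGroup P]
    {f g : Additive (Abelianization G) ⊗[ℤ] Additive (Abelianization H) →+ P}
    (hfg : ∀ a b, f (.ofMul (.of a) ⊗ₜ .ofMul (.of b)) = g (.ofMul (.of a) ⊗ₜ .ofMul (.of b))) :
    f = g := by
  ext t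
  induction t using TensorProduct.induction_on with
  | zero => simp
  | tmul x y =>
    obtain ⟨a, rfl⟩ := QuotientGroup.mk_surjective x.toMul
    obtain ⟨b, rfl⟩ := QuotientGroup.mk_surjective y.toMul
    exact hfg a b
  | add x y hx hy => simp [hx, hy]

-- `⟨m, n, z⟩` multiplies like the unitriangular matrix `[[1, m, z], [0, 1, n], [0, 0, 1]]`.
@[ext]
structure Heisenberg (M N : Type*) [AddCommGroup M] [AddCommGroup N] where
  fst : M
  snd : N
  z : M ⊗[ℤ] N

namespace Heisenberg

variable {M N : Type*} [AddCommGroup M] [AddCommGroup N]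

instance : One (Heisenberg M N) := ⟨⟨0, 0, 0⟩⟩
instance : Mul (Heisenberg M N) :=
  ⟨fun x y ↦ ⟨x.fst + y.fst, x.snd + y.snd, x.z + y.z + x.fst ⊗ₜ y.snd⟩⟩
instance : Inv (Heisenberg M N) := ⟨fun x ↦ ⟨-x.fst, -x.snd, -x.z + x.fst ⊗ₜ x.snd⟩⟩

@[simp] lemma one_fst : (1 : Heisenberg M N).fst = 0 := rfl
@[simp] lemma one_snd : (1 : Heisenberg M N).snd = 0 := rfl
@[simp] lemma one_z : (1 : Heisenberg M N).z = 0 := rfl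
@[simp] lemma mul_fst (x y : Heisenberg M N) : (x * y).fst = x.fst + y.fst := rfl
@[simp] lemma mul_snd (x y : Heisenberg M N) : (x * y).snd = x.snd + y.snd := rfl
@[simp] lemma mul_z (x y : Heisenberg M N) : (x * y).z = x.z + y.z + x.fst ⊗ₜ y.snd := rfl
@[simp] lemma inv_fst (x : Heisenberg M N) : x⁻¹.fst = -x.fst := rfl
@[simp] lemma inv_snd (x : Heisenberg M N) : x⁻¹.snd = -x.snd := rfl
@[simp] lemma inv_z (x : Heisenberg M N) : x⁻¹.z = -x.z + x.fst ⊗ₜ x.snd := rfl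

instance : Group (Heisenberg M N) where
  mul_assoc x y z := by ext <;> simp [add_tmul, tmul_add] <;> abel
  one_mul x := by ext <;> simp
  mul_one x := by ext <;> simp
  inv_mul_cancel x := by ext <;> simp [neg_tmul]

def inl : Multiplicative M →* Heisenberg M N where
  toFun m := ⟨m.toAdd, 0, 0⟩
  map_one' := rfl
  map_mul' m m' := by ext <;> simp

def inr : Multiplicative N →* Heisenberg M N where
  toFun n := ⟨0, n.toAdd, 0⟩
  map_one' := rfl
  map_mul' n n' := by ext <;> simp

def fstHom : Heisenberg M N →* Multiplicative M where
  toFun x := .ofAdd x.fst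
  map_one' := rfl
  map_mul' _ _ := rfl

lemma commutatorElement_inl_inr (m : Multiplicative M) (n : Multiplicative N) :
    ⁅(inl m : Heisenberg M N), inr n⁆ = (⟨0, 0, m.toAdd ⊗ₜ n.toAdd⟩ : Heisenberg M N) := by
  ext <;> simp [commutatorElement_def, inl, inr]

lemma mk_zero_zero_mem_center (t : M ⊗[ℤ] N) : (⟨0, 0, t⟩ : Heisenberg M N) ∈ Subgroup.center _ :=
  Subgroup.mem_center_iff.mpr fun x ↦ by ext <;> simp [add_comm]

lemma commutatorElement_inl_inr_mem_center (m : Multiplicative M) (n : Multiplicative N) :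
    ⁅(inl m : Heisenberg M N), inr n⁆ ∈ Subgroup.center (Heisenberg M N) :=
  commutatorElement_inl_inr m n ▸ mk_zero_zero_mem_center _

def zOnKerFst : (fstHom : Heisenberg M N →* _).ker →* Multiplicative (M ⊗[ℤ] N) where
  toFun x := .ofAdd x.1.z
  map_one' := rfl
  map_mul' x y := by
    have : x.1.fst = 0 := x.2
    simp [this]

end Heisenberg

open scoped IsMulCommutative

abbrev AbTensor (A B : Type*) [Group A] [Group B] : Type _ :=
  Additive (Abelianization A) ⊗[ℤ] Additive (Abelianization B)

namespace Nil2

variable {A B : Type*} [Group A] [Group B]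

theorem commutatorElement_inl_inr_mem_center (a : A) (b : B) :
    ⁅(inl a : Nil2 A B), inr b⁆ ∈ Subgroup.center (Nil2 A B) := by
  refine Subgroup.mem_center_iff.mpr fun g ↦ ?_
  obtain ⟨x, rfl⟩ := QuotientGroup.mk_surjective g
  exact commutatorElement_eq_one_iff_mul_comm.mp <|
    (QuotientGroup.eq_one_iff _).mpr (Subgroup.subset_normalClosure ⟨x, a, b, rfl⟩)

instance : IsMulCommutative (commSubgroup A B) :=
  Subgroup.isMulCommutative_closure <| by
    rintro _ ⟨a, b, rfl⟩ y -
    exact (Subgroup.mem_center_iff.mp (commutatorElement_inl_inr_mem_center a b) y).symm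

def bracket (a : A) (b : B) : commSubgroup A B :=
  ⟨⁅inl a, inr b⁆, Subgroup.subset_closure ⟨a, b, rfl⟩⟩

theorem commSubgroup_hom_ext {M : Type*} [Monoid M] {f g : commSubgroup A B →* M}
    (h : ∀ a b, f (bracket a b) = g (bracket a b)) : f = g :=
  MonoidHom.eq_of_eqOn_dense Subgroup.closure_closure_coe_preimage <| by
    rintro x ⟨a, b, hx⟩
    obtain rfl : x = bracket a b := Subtype.ext hx
    exact h a b

def bracketHom : A →* B →* commSubgroup A B :=
  MonoidHom.mk' (fun a ↦ MonoidHom.mk' (bracket a) fun b b' ↦ Subtype.ext <| by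
      simp only [bracket, map_mul, Subgroup.coe_mul,
        commutatorElement_mul_right_of_mem_center (commutatorElement_inl_inr_mem_center a b')])
    fun a a' ↦ by
      ext b
      simp only [MonoidHom.mk'_apply, MonoidHom.mul_apply, bracket, map_mul, Subgroup.coe_mul,
        commutatorElement_mul_left_of_mem_center (commutatorElement_inl_inr_mem_center a' b)]

def lift {G : Type*} [Group G] (f : A →* G) (g : B →* G)
    (h : ∀ a b, ⁅f a, g b⁆ ∈ Subgroup.center G) : Nil2 A B →* G :=
  QuotientGroup.lift _ (Coprod.lift f g) <| Subgroup.normalClosure_le_normal <| by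
    rintro _ ⟨x, a, b, rfl⟩
    simp only [SetLike.mem_coe, MonoidHom.mem_ker, map_commutatorElement, Coprod.lift_apply_inl,
      Coprod.lift_apply_inr, commutatorElement_eq_one_iff_mul_comm]
    exact Subgroup.mem_center_iff.mp (h a b) _

@[simp]
theorem lift_inl {G : Type*} [Group G] (f : A →* G) (g : B →* G)
    (h : ∀ a b, ⁅f a, g b⁆ ∈ Subgroup.center G) (a : A) : lift f g h (inl a) = f a :=
  Coprod.lift_apply_inl f g a

@[simp]
theorem lift_inr {G : Type*} [Group G] (f : A →* G) (g : B →* G)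
    (h : ∀ a b, ⁅f a, g b⁆ ∈ Subgroup.center G) (b : B) : lift f g h (inr b) = g b :=
  Coprod.lift_apply_inr f g b

def toHeisenberg :
    Nil2 A B →* Heisenberg (Additive (Abelianization A)) (Additive (Abelianization B)) :=
  lift (Heisenberg.inl.comp Abelianization.of) (Heisenberg.inr.comp Abelianization.of)
    fun _ _ ↦ Heisenberg.commutatorElement_inl_inr_mem_center _ _

theorem toHeisenberg_bracket (a : A) (b : B) :
    toHeisenberg (bracket a b : Nil2 A B) =
      ⟨0, 0, .ofMul (Abelianization.of a) ⊗ₜ .ofMul (Abelianization.of b)⟩ := by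
  simp only [bracket, toHeisenberg, map_commutatorElement, lift_inl, lift_inr]
  exact Heisenberg.commutatorElement_inl_inr _ _

theorem commSubgroup_le_ker_fst :
    commSubgroup A B ≤ (Heisenberg.fstHom.comp toHeisenberg).ker :=
  (Subgroup.closure_le _).mpr <| by
    rintro _ ⟨a, b, rfl⟩
    simp only [SetLike.mem_coe, MonoidHom.mem_ker, MonoidHom.comp_apply]
    exact congrArg Heisenberg.fstHom (toHeisenberg_bracket a b)

def commSubgroupToTensor : commSubgroup A B →* Multiplicative (AbTensor A B) :=
  Heisenberg.zOnKerFst.comp <|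
    (toHeisenberg.comp (commSubgroup A B).subtype).codRestrict _
      fun x ↦ commSubgroup_le_ker_fst x.2

def bracketPairing : Abelianization A →* Abelianization B →* commSubgroup A B :=
  Abelianization.lift₂ bracketHom

def tensorToCommSubgroup : Multiplicative (AbTensor A B) →* commSubgroup A B :=
  AddMonoidHom.toMultiplicativeLeft <|
    liftAddHom bracketPairing.toAdditive₂ (AddMonoidHom.apply_zsmul_left_eq_apply_zsmul_right _)

@[simp]
theorem commSubgroupToTensor_bracket (a : A) (b : B) :
    commSubgroupToTensor (bracket a b) =
      .ofAdd (.ofMul (Abelianization.of a) ⊗ₜ .ofMul (Abelianization.of b)) :=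
  congrArg (Multiplicative.ofAdd ∘ Heisenberg.z) (toHeisenberg_bracket a b)

@[simp]
theorem tensorToCommSubgroup_tmul (a : A) (b : B) :
    tensorToCommSubgroup (.ofAdd (.ofMul (Abelianization.of a) ⊗ₜ .ofMul (Abelianization.of b))) =
      bracket a b :=
  rfl

def commSubgroupEquivTensor : commSubgroup A B ≃* Multiplicative (AbTensor A B) :=
  commSubgroupToTensor.toMulEquiv tensorToCommSubgroup
    (commSubgroup_hom_ext fun a b ↦ by simp)
    (Multiplicative.monoidHom_ext _ _ <| addMonoidHom_ext_abelianization fun a b ↦ by simp)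

end Nil2

/-- The central subgroup `[A,B]⁽²⁾` of `A *₂ B` is isomorphic to `Aᵃᵇ ⊗ Bᵃᵇ`, via
`⁅a,b⁆ ↦ ā ⊗ b̄`. -/
theorem stmt8 (A B : Type*) [Group A] [Group B] :
    ∃ e : commSubgroup A B ≃*
      Multiplicative (TensorProduct ℤ (Additive (Abelianization A))
        (Additive (Abelianization B))),
      ∀ (a : A) (b : B),
        e ⟨⁅(Nil2.inl a : Nil2 A B), Nil2.inr b⁆, Subgroup.subset_closure ⟨a, b, rfl⟩⟩ =
          Multiplicative.ofAdd
            ((Additive.ofMul (Abelianization.of a)) ⊗ₜ[ℤ]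
              (Additive.ofMul (Abelianization.of b))) :=
  ⟨Nil2.commSubgroupEquivTensor, Nil2.commSubgroupToTensor_bracket⟩
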